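/- Exact design-based confidence sequence for the ATE (two-sided): if in the design-based setting |τ̂_i| ≤ m almost surely for all i, with constant m > 0, τ_i := E(τ̂_i | F_{i-1}), τ̄_n := (1/n)Σ_{i=1}^n τ_i, and S_n := Σ_{i=1}^n σ̂_i² where σ̂_i² = τ̂_i², then for any α ∈ (0,1), P( ∃ n ≥ 1 : | (1/n)Σ_{i=1}^n τ̂_i − τ̄_n | ≥ (m(m+1)/n)·log(2/α) + (S_n/n)·( ((m+1)/m)·log(1 + 1/m) − 1/m ) ) ≤ α; equivalently, the intervals (1/n)Σ_{i=1}^n τ̂_i ± [ (m(m+1)/n)·log(2/α) + (S_n/n)·( ((m+1)/m)·log(1+1/m) − 1/m ) ] form a valid (1−α) confidence sequence for the average treatment effect τ̄_n. -/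

import Mathlib

/-!
With `λ = 1 / (m (m + 1))` and `ψ = λ ((m + 1) / m · log (1 + 1 / m) - 1 / m)`, the elementary bound
`exp (s x - ψ x²) ≤ 1 + s x` for `|x| ≤ m` and `|s| = λ`, together with
`E[τ̂ᵢ | Fᵢ₋₁] = τᵢ := Yᵢ(1) - Yᵢ(0)`, makes `exp (± λ Σᵢ (τ̂ᵢ - τᵢ) - ψ Σᵢ τ̂ᵢ²)` two nonnegative
supermartingales started at `1`. By Ville's inequality each ever exceeds `2 / α` with probability at
most `α / 2`, and the radius in the statement is exactly the one for which a deviation forces one of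
them above `2 / α`.
-/

open MeasureTheory ProbabilityTheory Filter Real

namespace Real

theorem hasSum_pow_div_neg_log_one_sub_sub {t : ℝ} (ht : |t| < 1) :
    HasSum (fun n : ℕ => t ^ (n + 2) / (n + 2)) (-log (1 - t) - t) := by
  have h := (hasSum_nat_add_iff' 1).2 (hasSum_pow_div_log_of_abs_lt_one ht)
  simp only [Finset.sum_range_one, zero_add, pow_one, Nat.cast_zero, div_one] at h
  convert h using 3 with n
  · rfl
  · push_cast; ring

theorem sq_div_two_le_neg_log_one_sub_sub {a : ℝ} (ha0 : 0 ≤ a) (ha1 : a < 1) :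
    a ^ 2 / 2 ≤ -log (1 - a) - a := by
  have h := le_hasSum (hasSum_pow_div_neg_log_one_sub_sub (abs_lt.2 ⟨by linarith, ha1⟩)) 0
    (fun j _ => by positivity)
  simpa using h

theorem neg_log_one_sub_sub_le {a t : ℝ} (ht : 0 ≤ t) (hta : t ≤ a) (ha : a < 1) (ha0 : 0 < a) :
    -log (1 - t) - t ≤ (-log (1 - a) - a) / a ^ 2 * t ^ 2 := by
  rw [div_mul_eq_mul_div, mul_div_assoc]
  refine hasSum_le (fun n => ?_) (hasSum_pow_div_neg_log_one_sub_sub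
    (abs_lt.2 ⟨by linarith, by linarith⟩))
    ((hasSum_pow_div_neg_log_one_sub_sub (abs_lt.2 ⟨by linarith, ha⟩)).mul_right (t ^ 2 / a ^ 2))
  rw [show a ^ (n + 2) / (n + 2) * (t ^ 2 / a ^ 2) = a ^ n * t ^ 2 / (n + 2) by
    field_simp; ring, pow_add]
  gcongr

/-- The coefficient is the value of `(u - log (1 + u)) / u ^ 2` at `u = -a`, its maximum on
`[-a, ∞)` (Fan, Grama and Liu). -/
theorem exp_sub_mul_sq_le_one_add {a u : ℝ} (ha0 : 0 < a) (ha1 : a < 1) (hu : -a ≤ u) :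
    exp (u - (-log (1 - a) - a) / a ^ 2 * u ^ 2) ≤ 1 + u := by
  have hK : 1 / 2 ≤ (-log (1 - a) - a) / a ^ 2 := by
    rw [le_div_iff₀ (by positivity)]; linarith [sq_div_two_le_neg_log_one_sub_sub ha0.le ha1]
  have hlog : u - log (1 + u) ≤ (-log (1 - a) - a) / a ^ 2 * u ^ 2 := by
    rcases le_or_gt 0 u with hu0 | hu0
    · have h := le_log_one_add_of_nonneg hu0
      have : u - 2 * u / (u + 2) ≤ u ^ 2 / 2 := by
        rw [sub_le_iff_le_add, ← sub_le_iff_le_add', le_div_iff₀ (by linarith)]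
        nlinarith [pow_nonneg hu0 3]
      nlinarith [sq_nonneg u]
    · have h := neg_log_one_sub_sub_le (t := -u) (by linarith) (by linarith) ha1 ha0
      simp only [sub_neg_eq_add, neg_sq] at h
      linarith
  calc exp (u - (-log (1 - a) - a) / a ^ 2 * u ^ 2) ≤ exp (log (1 + u)) := by gcongr; linarith
    _ = 1 + u := exp_log (by linarith)

theorem exp_mul_sub_mul_sq_le_one_add_mul {m s x : ℝ} (hm : 0 < m) (hs : |s| = 1 / (m * (m + 1)))
    (hx : |x| ≤ m) :
    exp (s * x - ((m + 1) / m * log (1 + 1 / m) - 1 / m) / (m * (m + 1)) * x ^ 2) ≤ 1 + s * x := by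
  have ha0 : 0 < 1 / (m + 1) := by positivity
  have ha1 : 1 / (m + 1) < 1 := by rw [div_lt_one (by linarith)]; linarith
  have hsx : |s * x| ≤ 1 / (m + 1) := by
    rw [abs_mul, hs]
    calc 1 / (m * (m + 1)) * |x| ≤ 1 / (m * (m + 1)) * m := by gcongr
      _ = 1 / (m + 1) := by field_simp
  have hlog : -log (1 - 1 / (m + 1)) = log (1 + 1 / m) := by
    rw [← log_inv, one_sub_div (by positivity), add_sub_cancel_right, inv_div, add_div,
      div_self hm.ne']
  have hs2 : s ^ 2 = (1 / (m * (m + 1))) ^ 2 := by rw [← sq_abs, hs]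
  convert exp_sub_mul_sq_le_one_add ha0 ha1 (neg_le_of_abs_le hsx) using 3
  rw [hlog, mul_pow, hs2]
  field_simp

theorem mul_sub_mul_sq_le {s ψ x M : ℝ} (hx : |x| ≤ M) :
    s * x - ψ * x ^ 2 ≤ |s| * M + |ψ| * M ^ 2 := by
  have h1 : s * x ≤ |s| * M := (le_abs_self _).trans (abs_mul s x ▸ by gcongr)
  have h2 : -(ψ * x ^ 2) ≤ |ψ| * M ^ 2 := by
    rw [← neg_mul, ← sq_abs x]
    gcongr
    exact neg_le_abs ψ
  linarith

theorem exists_abs_eq_exp_le_of_le_abs_div {m n L V S c : ℝ} (hm : 0 < m) (hn : 0 < n)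
    (h : m * (m + 1) / n * L + V / n * c ≤ |S / n|) :
    ∃ s, |s| = 1 / (m * (m + 1)) ∧ exp L ≤ exp (s * S - c / (m * (m + 1)) * V) := by
  rw [abs_div, abs_of_pos hn, show m * (m + 1) / n * L + V / n * c =
      m * (m + 1) * (L + c / (m * (m + 1)) * V) / n by field_simp,
    div_le_div_iff_of_pos_right hn, ← le_div_iff₀' (by positivity)] at h
  have hl : 0 < 1 / (m * (m + 1)) := by positivity
  rcases abs_cases S with ⟨hS, _⟩ | ⟨hS, _⟩
  · refine ⟨1 / (m * (m + 1)), abs_of_pos hl, exp_le_exp.2 ?_⟩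
    rw [one_div_mul_eq_div]; rw [hS] at h; linarith
  · refine ⟨-(1 / (m * (m + 1))), by rw [abs_neg, abs_of_pos hl], exp_le_exp.2 ?_⟩
    rw [neg_mul, one_div_mul_eq_div]; rw [hS, neg_div] at h; linarith

end Real

theorem ipw_eq_mul_sub {w y1 y0 p : ℝ} (hw : w = 0 ∨ w = 1) :
    (if w = 1 then (w * y1 + (1 - w) * y0) / p else 0) -
        (if w = 0 then (w * y1 + (1 - w) * y0) / (1 - p) else 0) =
      w * (y1 / p) - (1 - w) * (y0 / (1 - p)) := by
  rcases hw with rfl | rfl <;> simp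

theorem ipw_variance_eq_sq {w y p : ℝ} (hw : w = 0 ∨ w = 1) :
    (if w = 1 then y ^ 2 / p ^ 2 else 0) + (if w = 0 then y ^ 2 / (1 - p) ^ 2 else 0) =
      ((if w = 1 then y / p else 0) - (if w = 0 then y / (1 - p) else 0)) ^ 2 := by
  rcases hw with rfl | rfl <;> simp [div_pow]

namespace MeasureTheory

variable {Ω : Type*} {m m0 : MeasurableSpace Ω} {μ : Measure Ω}

section FiniteMeasure

variable [IsFiniteMeasure μ]

theorem integrable_exp_of_ae_le {f : Ω → ℝ} {C : ℝ} (hf : AEStronglyMeasurable f μ)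
    (hC : ∀ᵐ ω ∂μ, f ω ≤ C) : Integrable (fun ω => exp (f ω)) μ :=
  .of_bound (continuous_exp.comp_aestronglyMeasurable hf) (exp C)
    (hC.mono fun ω h => by rw [norm_eq_abs, abs_exp]; exact exp_le_exp.2 h)

theorem condExp_exp_neg_mul_mul_le_one (hm : m ≤ m0) {X T Z : Ω → ℝ} {s : ℝ}
    (hX : Integrable X μ) (hT : StronglyMeasurable[m] T) (hXT : μ[X | m] =ᵐ[μ] T)
    (hZ : Integrable Z μ) (hTZ : Integrable (fun ω => exp (-(s * T ω)) * Z ω) μ)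
    (hZX : ∀ᵐ ω ∂μ, Z ω ≤ 1 + s * X ω) :
    μ[fun ω => exp (-(s * T ω)) * Z ω | m] ≤ᵐ[μ] 1 := by
  have hpull : μ[fun ω => exp (-(s * T ω)) * Z ω | m] =ᵐ[μ]
      fun ω => exp (-(s * T ω)) * μ[Z | m] ω :=
    condExp_mul_of_stronglyMeasurable_left
      (continuous_exp.comp_stronglyMeasurable (hT.const_mul s).neg) hTZ hZ
  have hmono : μ[Z | m] ≤ᵐ[μ] μ[fun ω => 1 + s * X ω | m] :=
    condExp_mono hZ ((integrable_const 1).add (hX.const_mul s)) hZX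
  have hlin : μ[fun ω => 1 + s * X ω | m] =ᵐ[μ] fun ω => 1 + s * T ω := by
    change μ[(fun _ => (1 : ℝ)) + s • X | m] =ᵐ[μ] _
    filter_upwards [condExp_add (integrable_const 1) (hX.smul s) m,
      condExp_smul (μ := μ) s X m, hXT] with ω h1 h2 h3
    rw [h1, Pi.add_apply, condExp_const hm, h2, Pi.smul_apply, h3, smul_eq_mul]
  filter_upwards [hpull, hmono, hlin] with ω h1 h2 h3
  rw [h1, Pi.one_apply]
  calc exp (-(s * T ω)) * μ[Z | m] ω ≤ exp (-(s * T ω)) * (1 + s * T ω) := by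
        gcongr; exact h3 ▸ h2
    _ ≤ exp (-(s * T ω)) * exp (s * T ω) := by gcongr; linarith [add_one_le_exp (s * T ω)]
    _ = 1 := by rw [← exp_add, neg_add_cancel, exp_zero]

theorem supermartingale_exp_sum_Icc {ℱ : Filtration ℕ m0} {D : ℕ → Ω → ℝ} {C : ℝ}
    (hD : ∀ i, StronglyMeasurable[ℱ (i + 1)] (D (i + 1)))
    (hDC : ∀ i, ∀ᵐ ω ∂μ, D (i + 1) ω ≤ C)
    (hstep : ∀ i, μ[fun ω => exp (D (i + 1) ω) | ℱ i] ≤ᵐ[μ] 1) :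
    Supermartingale (fun n ω => exp (∑ i ∈ Finset.Icc 1 n, D i ω)) ℱ μ := by
  have hsum : ∀ n, StronglyMeasurable[ℱ n] fun ω => ∑ i ∈ Finset.Icc 1 n, D i ω := by
    refine fun n => Finset.stronglyMeasurable_fun_sum _ fun i hi => ?_
    obtain ⟨j, rfl⟩ : ∃ j, i = j + 1 := ⟨i - 1, by grind⟩
    exact (hD j).mono (ℱ.mono (Finset.mem_Icc.1 hi).2)
  have hadapted : StronglyAdapted ℱ (fun n ω => exp (∑ i ∈ Finset.Icc 1 n, D i ω)) :=
    fun n => continuous_exp.comp_stronglyMeasurable (hsum n)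
  have hint : ∀ n, Integrable (fun ω => exp (∑ i ∈ Finset.Icc 1 n, D i ω)) μ := by
    refine fun n => integrable_exp_of_ae_le ((hsum n).mono (ℱ.le n)).aestronglyMeasurable
      (C := n * C) ?_
    filter_upwards [ae_all_iff.2 hDC] with ω hω
    calc ∑ i ∈ Finset.Icc 1 n, D i ω ≤ ∑ _i ∈ Finset.Icc 1 n, C := Finset.sum_le_sum fun i hi => by
          obtain ⟨j, rfl⟩ : ∃ j, i = j + 1 := ⟨i - 1, by grind⟩
          exact hω j
      _ = n * C := by simp
  refine supermartingale_nat hadapted hint fun n => ?_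
  have hsplit : (fun ω => exp (∑ i ∈ Finset.Icc 1 (n + 1), D i ω)) =
      (fun ω => exp (∑ i ∈ Finset.Icc 1 n, D i ω)) * fun ω => exp (D (n + 1) ω) := by
    funext ω
    rw [Pi.mul_apply, Finset.sum_Icc_succ_top (by omega), exp_add]
  have hDint : Integrable (fun ω => exp (D (n + 1) ω)) μ :=
    integrable_exp_of_ae_le ((hD n).mono (ℱ.le _)).aestronglyMeasurable (hDC n)
  filter_upwards [condExp_mul_of_stronglyMeasurable_left (hadapted n) (hsplit ▸ hint (n + 1))
    hDint, hstep n] with ω h1 h2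
  rw [hsplit, h1, Pi.mul_apply]
  exact mul_le_of_le_one_right (exp_pos _).le h2

theorem supermartingale_exp_tilt {ℱ : Filtration ℕ m0} {X T : ℕ → Ω → ℝ} {M s ψ : ℝ}
    (hX : ∀ i, StronglyMeasurable[ℱ (i + 1)] (X (i + 1)))
    (hT : ∀ i, StronglyMeasurable[ℱ i] (T (i + 1)))
    (hXint : ∀ i, Integrable (X (i + 1)) μ)
    (hXM : ∀ i, ∀ᵐ ω ∂μ, |X (i + 1) ω| ≤ M)
    (hXT : ∀ i, μ[X (i + 1) | ℱ i] =ᵐ[μ] T (i + 1))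
    (hkey : ∀ x, |x| ≤ M → exp (s * x - ψ * x ^ 2) ≤ 1 + s * x) :
    Supermartingale
      (fun n ω => exp (∑ i ∈ Finset.Icc 1 n, (s * (X i ω - T i ω) - ψ * X i ω ^ 2))) ℱ μ := by
  have hTM : ∀ i, ∀ᵐ ω ∂μ, |T (i + 1) ω| ≤ M := fun i => by
    filter_upwards [ae_bdd_abs_condExp_of_ae_bdd_abs (m := ℱ i) (hXM i), hXT i] with ω h1 h2
    rwa [← h2]
  have hZ : ∀ i, StronglyMeasurable[ℱ (i + 1)]
      fun ω => s * X (i + 1) ω - ψ * X (i + 1) ω ^ 2 := fun i =>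
    ((hX i).const_mul s).sub (((hX i).pow 2).const_mul ψ)
  have hD : ∀ i, StronglyMeasurable[ℱ (i + 1)]
      fun ω => s * (X (i + 1) ω - T (i + 1) ω) - ψ * X (i + 1) ω ^ 2 := fun i =>
    (((hX i).sub ((hT i).mono (ℱ.mono i.le_succ))).const_mul s).sub (((hX i).pow 2).const_mul ψ)
  have hDC : ∀ i, ∀ᵐ ω ∂μ, s * (X (i + 1) ω - T (i + 1) ω) - ψ * X (i + 1) ω ^ 2 ≤
      |s| * M + (|s| * M + |ψ| * M ^ 2) := fun i => by
    filter_upwards [hXM i, hTM i] with ω hX hT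
    have hsT : -(s * T (i + 1) ω) ≤ |s| * M :=
      (neg_le_abs _).trans (abs_mul s _ ▸ by gcongr)
    linarith [mul_sub_mul_sq_le (s := s) (ψ := ψ) hX]
  refine supermartingale_exp_sum_Icc hD hDC fun i => ?_
  have hsplit : (fun ω => exp (s * (X (i + 1) ω - T (i + 1) ω) - ψ * X (i + 1) ω ^ 2)) =
      fun ω => exp (-(s * T (i + 1) ω)) * exp (s * X (i + 1) ω - ψ * X (i + 1) ω ^ 2) := by
    funext ω; rw [← exp_add]; ring_nf
  have hint := integrable_exp_of_ae_le ((hD i).mono (ℱ.le _)).aestronglyMeasurable (hDC i)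
  rw [hsplit] at hint ⊢
  exact condExp_exp_neg_mul_mul_le_one (ℱ.le i) (hXint i) (hT i) (hXT i)
    (integrable_exp_of_ae_le ((hZ i).mono (ℱ.le _)).aestronglyMeasurable
      ((hXM i).mono fun ω h => mul_sub_mul_sq_le h))
    hint ((hXM i).mono fun ω hω => hkey _ hω)

theorem Supermartingale.ville_ineq_finite_horizon {𝒢 : Filtration ℕ m0} {f : ℕ → Ω → ℝ}
    (hf : Supermartingale f 𝒢 μ) (hnonneg : 0 ≤ f) {ε : ℝ} (hε : 0 < ε) (N : ℕ) :
    μ {ω | ∃ n ≤ N, ε ≤ f n ω} ≤ ENNReal.ofReal ((∫ ω, f 0 ω ∂μ) / ε) := by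
  set τ : Ω → ℕ∞ := fun ω => (hittingBtwn f (Set.Ici ε) 0 N ω : ℕ)
  have hτ : IsStoppingTime 𝒢 τ :=
    hf.stronglyAdapted.adapted.isStoppingTime_hittingBtwn measurableSet_Ici
  have hτN : ∀ ω, τ ω ≤ N := fun ω => by
    simp only [τ]; exact_mod_cast hittingBtwn_le (u := f) (s := Set.Ici ε) (n := 0) (m := N) ω
  have hstop : ∫ ω, stoppedValue f τ ω ∂μ ≤ ∫ ω, f 0 ω ∂μ := by
    have h := hf.neg.expected_stoppedValue_mono (isStoppingTime_const 𝒢 0) hτ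
      (fun ω => zero_le) hτN
    simp only [stoppedValue, Pi.neg_apply, integral_neg, neg_le_neg_iff] at h
    exact h
  have hsub : {ω | ∃ n ≤ N, ε ≤ f n ω} ⊆ {ω | ε ≤ stoppedValue f τ ω} :=
    fun ω ⟨n, hn, h⟩ => stoppedValue_hittingBtwn_mem ⟨n, ⟨Nat.zero_le n, hn⟩, h⟩
  have hmarkov : ε * μ.real {ω | ε ≤ stoppedValue f τ ω} ≤ ∫ ω, stoppedValue f τ ω ∂μ :=
    mul_meas_ge_le_integral_of_nonneg (ae_of_all _ fun ω => hnonneg _ _)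
    (integrable_stoppedValue ℕ hτ hf.integrable hτN) ε
  calc μ {ω | ∃ n ≤ N, ε ≤ f n ω} ≤ μ {ω | ε ≤ stoppedValue f τ ω} := measure_mono hsub
    _ = ENNReal.ofReal (μ.real {ω | ε ≤ stoppedValue f τ ω}) :=
      (ofReal_measureReal (measure_ne_top _ _)).symm
    _ ≤ ENNReal.ofReal ((∫ ω, f 0 ω ∂μ) / ε) :=
      ENNReal.ofReal_le_ofReal ((le_div_iff₀ hε).2 (by linarith))

theorem Supermartingale.ville_ineq {𝒢 : Filtration ℕ m0} {f : ℕ → Ω → ℝ}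
    (hf : Supermartingale f 𝒢 μ) (hnonneg : 0 ≤ f) {ε : ℝ} (hε : 0 < ε) :
    μ {ω | ∃ n, ε ≤ f n ω} ≤ ENNReal.ofReal ((∫ ω, f 0 ω ∂μ) / ε) := by
  have hunion : {ω | ∃ n, ε ≤ f n ω} = ⋃ N, {ω | ∃ n ≤ N, ε ≤ f n ω} := by
    ext ω
    simp only [Set.mem_ofPred_eq, Set.mem_iUnion]
    exact ⟨fun ⟨n, h⟩ => ⟨n, n, le_rfl, h⟩, fun ⟨_, n, _, h⟩ => ⟨n, h⟩⟩
  have hmono : Monotone fun N => {ω | ∃ n ≤ N, ε ≤ f n ω} :=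
    fun _ _ hNN' _ ⟨n, hn, h⟩ => ⟨n, hn.trans hNN', h⟩
  rw [hunion, hmono.measure_iUnion]
  exact iSup_le (hf.ville_ineq_finite_horizon hnonneg hε)

theorem condExp_mul_sub_one_sub_mul (hm : m ≤ m0) {w a b p : Ω → ℝ}
    (hw : ∀ ω, w ω = 0 ∨ w ω = 1) (hwm : AEStronglyMeasurable w μ)
    (ha : StronglyMeasurable[m] a) (hb : StronglyMeasurable[m] b) (hp : p =ᵐ[μ] μ[w | m])
    (hint : Integrable (fun ω => w ω * a ω - (1 - w ω) * b ω) μ) :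
    μ[fun ω => w ω * a ω - (1 - w ω) * b ω | m] =ᵐ[μ] fun ω => p ω * a ω - (1 - p ω) * b ω := by
  have hw1 : ∀ᵐ ω ∂μ, ‖w ω‖ ≤ 1 := ae_of_all _ fun ω => by rcases hw ω with h | h <;> simp [h]
  have hwint : Integrable w μ := .of_bound hwm 1 hw1
  have hwa : Integrable (w * a) μ := by
    have : w * a = fun ω => w ω * (w ω * a ω - (1 - w ω) * b ω) :=
      funext fun ω => by rcases hw ω with h | h <;> simp [h]
    exact this ▸ hint.bdd_mul hwm hw1
  have hwb : Integrable ((1 - w) * b) μ := by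
    have : (1 - w) * b = w * a - fun ω => w ω * a ω - (1 - w ω) * b ω := by
      funext ω; simp only [Pi.mul_apply, Pi.sub_apply, Pi.one_apply]; ring
    exact this ▸ hwa.sub hint
  have h1w : μ[1 - w | m] =ᵐ[μ] 1 - p := by
    change μ[(fun _ => (1 : ℝ)) - w | m] =ᵐ[μ] _
    filter_upwards [condExp_sub (integrable_const 1) hwint m, hp] with ω h hpω
    rw [h, Pi.sub_apply, Pi.sub_apply, condExp_const hm, hpω]; rfl
  change μ[w * a - (1 - w) * b | m] =ᵐ[μ] _
  filter_upwards [condExp_sub hwa hwb m, condExp_mul_of_stronglyMeasurable_right ha hwa hwint,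
    condExp_mul_of_stronglyMeasurable_right hb hwb ((integrable_const 1).sub hwint), hp, h1w]
    with ω h hwa hwb hpω h1wω
  rw [h, Pi.sub_apply, hwa, hwb, Pi.mul_apply, Pi.mul_apply, h1wω, ← hpω]; rfl

theorem condExp_ipw (hm : m ≤ m0) {w y1 y0 p : Ω → ℝ}
    (hw : ∀ ω, w ω = 0 ∨ w ω = 1) (hwm : AEStronglyMeasurable w μ)
    (hy1 : StronglyMeasurable[m] y1) (hy0 : StronglyMeasurable[m] y0)
    (hpm : StronglyMeasurable[m] p) (hp : p =ᵐ[μ] μ[w | m])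
    (hp01 : ∀ᵐ ω ∂μ, 0 < p ω ∧ p ω < 1)
    (hint : Integrable (fun ω => w ω * (y1 ω / p ω) - (1 - w ω) * (y0 ω / (1 - p ω))) μ) :
    μ[fun ω => w ω * (y1 ω / p ω) - (1 - w ω) * (y0 ω / (1 - p ω)) | m] =ᵐ[μ]
      fun ω => y1 ω - y0 ω := by
  filter_upwards [condExp_mul_sub_one_sub_mul (a := fun ω => y1 ω / p ω)
    (b := fun ω => y0 ω / (1 - p ω)) hm hw hwm
    (hy1.measurable.div hpm.measurable).stronglyMeasurable
    (hy0.measurable.div (measurable_const.sub hpm.measurable)).stronglyMeasurable hp hint, hp01]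
    with ω h ⟨hp0, hp1⟩
  rw [h]
  field_simp [(sub_pos.2 hp1).ne']

end FiniteMeasure

theorem measure_exists_le_abs_avg_sub_avg_le [IsProbabilityMeasure μ] {ℱ : Filtration ℕ m0}
    {X T : ℕ → Ω → ℝ} {m α : ℝ} (hm : 0 < m) (hα : 0 < α)
    (hX : ∀ i, 1 ≤ i → StronglyMeasurable[ℱ i] (X i))
    (hT : ∀ i, 1 ≤ i → StronglyMeasurable[ℱ (i - 1)] (T i))
    (hXint : ∀ i, 1 ≤ i → Integrable (X i) μ)
    (hXm : ∀ i, 1 ≤ i → ∀ᵐ ω ∂μ, |X i ω| ≤ m)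
    (hXT : ∀ i, 1 ≤ i → μ[X i | ℱ (i - 1)] =ᵐ[μ] T i) :
    μ {ω | ∃ n : ℕ, 1 ≤ n ∧
        m * (m + 1) / n * log (2 / α) +
          (∑ i ∈ Finset.Icc 1 n, X i ω ^ 2) / n * ((m + 1) / m * log (1 + 1 / m) - 1 / m)
        ≤ |(∑ i ∈ Finset.Icc 1 n, X i ω) / n - (∑ i ∈ Finset.Icc 1 n, T i ω) / n|}
      ≤ ENNReal.ofReal α := by
  set c := (m + 1) / m * log (1 + 1 / m) - 1 / m
  set l := 1 / (m * (m + 1))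
  have hl : 0 < l := by positivity
  set F : ℝ → ℕ → Ω → ℝ := fun s n ω =>
    exp (∑ i ∈ Finset.Icc 1 n, (s * (X i ω - T i ω) - c / (m * (m + 1)) * X i ω ^ 2))
  have hville : ∀ s, |s| = l → μ {ω | ∃ n, 2 / α ≤ F s n ω} ≤ ENNReal.ofReal (α / 2) := by
    intro s hs
    have hsup : Supermartingale (F s) ℱ μ :=
      supermartingale_exp_tilt (fun i => hX (i + 1) (by omega))
        (fun i => by simpa using hT (i + 1) (by omega)) (fun i => hXint (i + 1) (by omega))
        (fun i => hXm (i + 1) (by omega)) (fun i => by simpa using hXT (i + 1) (by omega))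
        (fun x hx => exp_mul_sub_mul_sq_le_one_add_mul hm hs hx)
    simpa [F] using hsup.ville_ineq (fun n ω => (exp_pos _).le) (by positivity : (0 : ℝ) < 2 / α)
  have hsub : {ω | ∃ n : ℕ, 1 ≤ n ∧
        m * (m + 1) / n * log (2 / α) + (∑ i ∈ Finset.Icc 1 n, X i ω ^ 2) / n * c
        ≤ |(∑ i ∈ Finset.Icc 1 n, X i ω) / n - (∑ i ∈ Finset.Icc 1 n, T i ω) / n|} ⊆
      {ω | ∃ n, 2 / α ≤ F l n ω} ∪ {ω | ∃ n, 2 / α ≤ F (-l) n ω} := by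
    rintro ω ⟨n, hn, h⟩
    rw [← sub_div, ← Finset.sum_sub_distrib] at h
    obtain ⟨s, hs, hle⟩ := exists_abs_eq_exp_le_of_le_abs_div hm (by exact_mod_cast hn) h
    have hF : 2 / α ≤ F s n ω := by
      rw [← exp_log (by positivity : 0 < 2 / α)]
      simp only [F, mul_sub, Finset.sum_sub_distrib, Finset.mul_sum] at hle ⊢
      exact hle
    rcases (abs_eq hl.le).1 hs with rfl | rfl
    exacts [Or.inl ⟨n, hF⟩, Or.inr ⟨n, hF⟩]
  calc _ ≤ μ ({ω | ∃ n, 2 / α ≤ F l n ω} ∪ {ω | ∃ n, 2 / α ≤ F (-l) n ω}) := measure_mono hsub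
    _ ≤ μ {ω | ∃ n, 2 / α ≤ F l n ω} + μ {ω | ∃ n, 2 / α ≤ F (-l) n ω} := measure_union_le _ _
    _ ≤ ENNReal.ofReal (α / 2) + ENNReal.ofReal (α / 2) :=
      add_le_add (hville l (abs_of_pos hl)) (hville (-l) (by rw [abs_neg, abs_of_pos hl]))
    _ = ENNReal.ofReal α := by rw [← ENNReal.ofReal_add (by positivity) (by positivity), add_halves]

end MeasureTheory

/-- **exact design-based confidence sequence for the ATE, two-sided.**
If `|τ̂_i| ≤ m` a.s. with constant `m > 0`, then for any `α ∈ (0,1)`,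
`P(∃ n ≥ 1 : |(1/n)Σ τ̂_i − τ̄_n| ≥ (m(m+1)/n)·log(2/α)
  + (S_n/n)·(((m+1)/m)·log(1+1/m) − 1/m)) ≤ α`,
i.e. the intervals form a valid `(1−α)` confidence sequence for the ATE `τ̄_n`. -/
theorem exact_design_based_confidence_sequence_ate
    {Ω : Type*} {m0 : MeasurableSpace Ω} {μ : Measure Ω} [IsProbabilityMeasure μ]
    (ℱ : Filtration ℕ m0)
    (Y1 Y0 : ℕ → Ω → ℝ) (W : ℕ → Ω → ℝ) (p1 : ℕ → Ω → ℝ) (Y τhat σhatSq : ℕ → Ω → ℝ)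
    (m : ℝ) (hm : 0 < m)
    -- potential outcomes are `F_{i-1}`-measurable
    (hY1 : ∀ i, 1 ≤ i → StronglyMeasurable[ℱ (i - 1)] (Y1 i))
    (hY0 : ∀ i, 1 ≤ i → StronglyMeasurable[ℱ (i - 1)] (Y0 i))
    -- the treatment is `{0,1}`-valued and `F_i`-measurable
    (hW01 : ∀ i ω, W i ω = 0 ∨ W i ω = 1)
    (hWmeas : ∀ i, 1 ≤ i → StronglyMeasurable[ℱ i] (W i))
    -- `p_i(1) = P(W_i = 1 | F_{i-1})` is `F_{i-1}`-measurable and lies in `(0,1)` a.s.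
    (hp1meas : ∀ i, 1 ≤ i → StronglyMeasurable[ℱ (i - 1)] (p1 i))
    (hp1 : ∀ i, 1 ≤ i →
      p1 i =ᵐ[μ] μ[fun ω => if W i ω = 1 then (1 : ℝ) else 0 | ℱ (i - 1)])
    (hp_pos : ∀ i, 1 ≤ i → ∀ᵐ ω ∂μ, 0 < p1 i ω ∧ p1 i ω < 1)
    -- observed outcome
    (hY : ∀ i ω, Y i ω = W i ω * Y1 i ω + (1 - W i ω) * Y0 i ω)
    -- IPW estimator
    (hτhat : ∀ i ω, τhat i ω =
      (if W i ω = 1 then Y i ω / p1 i ω else 0) -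
      (if W i ω = 0 then Y i ω / (1 - p1 i ω) else 0))
    -- variance estimator (here `σ̂_i² = τ̂_i²`)
    (hσhatSq : ∀ i ω, σhatSq i ω =
      (if W i ω = 1 then (Y i ω) ^ 2 / (p1 i ω) ^ 2 else 0) +
      (if W i ω = 0 then (Y i ω) ^ 2 / (1 - p1 i ω) ^ 2 else 0))
    (hint : ∀ i, 1 ≤ i → Integrable (τhat i) μ)
    -- uniform a.s. bound on the IPW estimates
    (hbdd : ∀ i, 1 ≤ i → ∀ᵐ ω ∂μ, |τhat i ω| ≤ m)
    (α : ℝ) (hα : α ∈ Set.Ioo (0 : ℝ) 1) :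
    μ {ω | ∃ n : ℕ, 1 ≤ n ∧
        (m * (m + 1) / (n : ℝ)) * Real.log (2 / α) +
          ((∑ i ∈ Finset.Icc 1 n, σhatSq i ω) / (n : ℝ)) *
            ((m + 1) / m * Real.log (1 + 1 / m) - 1 / m)
        ≤ |(∑ i ∈ Finset.Icc 1 n, τhat i ω) / (n : ℝ) -
            (∑ i ∈ Finset.Icc 1 n, (Y1 i ω - Y0 i ω)) / (n : ℝ)|}
      ≤ ENNReal.ofReal α := by
  have hτ : ∀ i, τhat i = fun ω =>
      W i ω * (Y1 i ω / p1 i ω) - (1 - W i ω) * (Y0 i ω / (1 - p1 i ω)) :=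
    fun i => funext fun ω => by rw [hτhat, hY, ipw_eq_mul_sub (hW01 i ω)]
  have hσ : ∀ i ω, σhatSq i ω = τhat i ω ^ 2 := fun i ω => by
    rw [hσhatSq, hτhat, ipw_variance_eq_sq (hW01 i ω)]
  have hind : ∀ i, (fun ω => if W i ω = 1 then (1 : ℝ) else 0) = W i :=
    fun i => funext fun ω => by rcases hW01 i ω with h | h <;> simp [h]
  simp_rw [hσ]
  refine measure_exists_le_abs_avg_sub_avg_le (T := fun i ω => Y1 i ω - Y0 i ω) hm hα.1
    (fun i hi => ?_) (fun i hi => (hY1 i hi).sub (hY0 i hi)) hint hbdd (fun i hi => ?_)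
  · have hle := ℱ.mono (Nat.sub_le i 1)
    rw [hτ i]
    have := (hWmeas i hi).measurable
    have := ((hY1 i hi).mono hle).measurable
    have := ((hY0 i hi).mono hle).measurable
    have := ((hp1meas i hi).mono hle).measurable
    exact Measurable.stronglyMeasurable (by fun_prop)
  · rw [hτ i]
    exact condExp_ipw (ℱ.le _) (hW01 i) ((hWmeas i hi).mono (ℱ.le i)).aestronglyMeasurable
      (hY1 i hi) (hY0 i hi) (hp1meas i hi) (hind i ▸ hp1 i hi) (hp_pos i hi) (hτ i ▸ hint i hi)
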